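/- arXiv:0802.1549 — 2 statements merged into one kernel-verified Lean document; each statement's English description precedes it below -/
import Mathlib

section
/- The integral ∫_{(0,∞)²} (λ_1² − 6λ_1 + 7) λ_1 λ_2 |λ_1 − λ_2| e^{−λ_1 − 2λ_2} dλ_1 dλ_2 is strictly positive. -/
/-!
The factor `λ₁² - 6λ₁ + 7` is negative for `3 - √2 < λ₁ < 3 + √2`, so positivity is shown by
computing the integral exactly: it equals `175/324`. By Fubini, integrate over `λ₂` first;
splitting at `λ₂ = λ₁` gives `∫ λ₂ |λ₁ - λ₂| e^{-2λ₂} dλ₂ = (λ₁ - 1)/4 + (λ₁ + 1) e^{-2λ₁}/2`.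
Every integral left is of the form `∫ q(t) e^{-ct} dt` with `q` a polynomial, and is evaluated
through the antiderivative `p(t) e^{-ct}`, where `p' - c p = q`.
-/

open MeasureTheory Set Filter Topology Polynomial Real

theorem Polynomial.hasDerivAt_eval_mul_exp_neg_mul (p : ℝ[X]) (c x : ℝ) :
    HasDerivAt (fun t => p.eval t * exp (-c * t))
      ((p.derivative.eval x - c * p.eval x) * exp (-c * x)) x := by
  have hexp : HasDerivAt (fun t => exp (-c * t)) (exp (-c * x) * -c) x := by
    simpa using ((hasDerivAt_id x).const_mul (-c)).exp
  exact ((p.hasDerivAt x).mul hexp).congr_deriv (by ring)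

theorem Polynomial.tendsto_eval_mul_exp_neg_mul_atTop (p : ℝ[X]) {c : ℝ} (hc : 0 < c) :
    Tendsto (fun t => p.eval t * exp (-c * t)) atTop (𝓝 0) := by
  have hcomp := (p.comp (C c⁻¹ * X)).tendsto_div_exp_atTop.comp
    (tendsto_id.const_mul_atTop hc)
  refine hcomp.congr fun t => ?_
  simp [hc.ne', div_eq_mul_inv, ← exp_neg]

theorem Polynomial.integrableOn_eval_mul_exp_neg_mul_Ioi (p : ℝ[X]) {c : ℝ} (hc : 0 < c)
    (a : ℝ) : IntegrableOn (fun t => p.eval t * exp (-c * t)) (Ioi a) := by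
  refine integrable_of_isBigO_exp_neg (half_pos hc) (by fun_prop) ?_
  have hsplit : (fun t => p.eval t * exp (-c * t))
      = fun t => (p.eval t * exp (-(c / 2) * t)) * exp (-(c / 2) * t) := by
    ext t
    rw [mul_assoc, ← exp_add]
    ring_nf
  rw [hsplit]
  simpa using
    ((p.tendsto_eval_mul_exp_neg_mul_atTop (half_pos hc)).isBigO_one ℝ).mul
      (Asymptotics.isBigO_refl (fun t => exp (-(c / 2) * t)) atTop)

theorem Polynomial.integrableOn_derivative_sub_mul_exp_neg_mul_Ioi (p : ℝ[X]) {c : ℝ}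
    (hc : 0 < c) (a : ℝ) :
    IntegrableOn (fun t => (p.derivative.eval t - c * p.eval t) * exp (-c * t)) (Ioi a) := by
  simpa using (p.derivative - C c * p).integrableOn_eval_mul_exp_neg_mul_Ioi hc a

theorem Polynomial.integral_Ioi_derivative_sub_mul_exp_neg_mul (p : ℝ[X]) {c : ℝ}
    (hc : 0 < c) (a : ℝ) :
    ∫ t in Ioi a, (p.derivative.eval t - c * p.eval t) * exp (-c * t)
      = -(p.eval a * exp (-c * a)) := by
  rw [integral_Ioi_of_hasDerivAt_of_tendsto'
    (fun x _ => p.hasDerivAt_eval_mul_exp_neg_mul c x)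
    (p.integrableOn_derivative_sub_mul_exp_neg_mul_Ioi hc a)
    (p.tendsto_eval_mul_exp_neg_mul_atTop hc), zero_sub]

theorem Polynomial.integral_derivative_sub_mul_exp_neg_mul (p : ℝ[X]) (c a b : ℝ) :
    ∫ t in a..b, (p.derivative.eval t - c * p.eval t) * exp (-c * t)
      = p.eval b * exp (-c * b) - p.eval a * exp (-c * a) :=
  intervalIntegral.integral_eq_sub_of_hasDerivAt
    (fun x _ => p.hasDerivAt_eval_mul_exp_neg_mul c x)
    (Continuous.intervalIntegrable (by fun_prop) a b)

theorem integrableOn_eval_mul_eval_mul_abs_sub_mul_exp (P Q : ℝ[X]) {a b : ℝ} (ha : 0 < a)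
    (hb : 0 < b) :
    IntegrableOn (fun z : ℝ × ℝ => P.eval z.1 * Q.eval z.2 * |z.1 - z.2| *
      exp (-a * z.1 - b * z.2)) (Ioi 0 ×ˢ Ioi 0) := by
  have hmajor : IntegrableOn (fun z : ℝ × ℝ => ‖(P * (X + 1)).eval z.1 * exp (-a * z.1)‖ *
      ‖(Q * (X + 1)).eval z.2 * exp (-b * z.2)‖) (Ioi 0 ×ˢ Ioi 0) := by
    rw [IntegrableOn, Measure.volume_eq_prod, ← Measure.prod_restrict]
    exact ((P * (X + 1)).integrableOn_eval_mul_exp_neg_mul_Ioi ha 0).norm.mul_prod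
      ((Q * (X + 1)).integrableOn_eval_mul_exp_neg_mul_Ioi hb 0).norm
  refine hmajor.mono' (Continuous.aestronglyMeasurable (by fun_prop)) ?_
  filter_upwards [ae_restrict_mem (measurableSet_Ioi.prod measurableSet_Ioi)]
    with ⟨x, y⟩ ⟨hx, hy⟩
  have hxy : |x - y| ≤ (x + 1) * (y + 1) := by
    rw [abs_sub_le_iff]
    constructor <;> nlinarith [hx.out, hy.out]
  simp only [norm_mul, eval_mul, eval_add, eval_X, eval_one, Real.norm_eq_abs, abs_abs,
    abs_exp, abs_of_pos (show 0 < x + 1 by linarith [hx.out]),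
    abs_of_pos (show 0 < y + 1 by linarith [hy.out]), sub_eq_add_neg, exp_add, ← neg_mul]
  calc |P.eval x| * |Q.eval y| * |x - y| * (exp (-a * x) * exp (-b * y))
      ≤ |P.eval x| * |Q.eval y| * ((x + 1) * (y + 1)) * (exp (-a * x) * exp (-b * y)) := by
        gcongr
    _ = _ := by ring

theorem integral_Ioi_mul_abs_sub_mul_exp_neg_two_mul {x : ℝ} (hx : 0 < x) :
    ∫ y in Ioi 0, y * |x - y| * exp (-2 * y) = (x - 1) / 4 + (x + 1) * exp (-2 * x) / 2 := by
  -- `p' - c p = q` is solved by `p = -(q / c + q' / c ^ 2 + q'' / c ^ 3 + ⋯)`.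
  set p : ℝ[X] := C (1 / 2) * X ^ 2 + C ((1 - x) / 2) * X + C ((1 - x) / 4)
  have hp : ∀ y, p.derivative.eval y - 2 * p.eval y = y * (x - y) := fun y => by
    simp [p]
    ring
  have hnear : ∫ y in (0)..x, y * |x - y| * exp (-2 * y)
      = p.eval x * exp (-2 * x) - p.eval 0 * exp (-2 * 0) := by
    rw [← p.integral_derivative_sub_mul_exp_neg_mul]
    refine intervalIntegral.integral_congr fun y hy => ?_
    rw [uIcc_of_le hx.le] at hy
    simp only [hp, abs_of_nonneg (sub_nonneg.2 hy.2)]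
  have hfar_eq : EqOn (fun y => y * |x - y| * exp (-2 * y))
      (fun y => ((-p).derivative.eval y - 2 * (-p).eval y) * exp (-2 * y)) (Ioi x) :=
    fun y hy => by
      simp only [derivative_neg, eval_neg, abs_of_neg (sub_neg.2 hy.out)]
      linear_combination exp (-2 * y) * hp y
  have hfar_int : IntegrableOn (fun y => y * |x - y| * exp (-2 * y)) (Ioi x) :=
    ((-p).integrableOn_derivative_sub_mul_exp_neg_mul_Ioi two_pos x).congr_fun
      hfar_eq.symm measurableSet_Ioi
  rw [← intervalIntegral.integral_interval_add_Ioi'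
    (Continuous.intervalIntegrable (by fun_prop) 0 x) hfar_int, hnear,
    setIntegral_congr_fun measurableSet_Ioi hfar_eq,
    (-p).integral_Ioi_derivative_sub_mul_exp_neg_mul two_pos]
  simp [p]
  ring

theorem integral_Ioi_integral_Ioi_eq :
    ∫ x in Ioi 0, ∫ y in Ioi 0, (x ^ 2 - 6 * x + 7) * x * y * |x - y| * exp (-x - 2 * y)
      = 175 / 324 := by
  set p₁ : ℝ[X] := -C (1 / 4) * X ^ 4 + C (3 / 4) * X ^ 3 - X ^ 2 - C (1 / 4) * X - C (1 / 4)
  set p₂ : ℝ[X] :=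
    -C (1 / 6) * X ^ 4 + C (11 / 18) * X ^ 3 + C (4 / 9) * X ^ 2 - C (47 / 54) * X - C (47 / 162)
  have hinner : ∀ x ∈ Ioi (0 : ℝ),
      ∫ y in Ioi 0, (x ^ 2 - 6 * x + 7) * x * y * |x - y| * exp (-x - 2 * y)
        = (p₁.derivative.eval x - 1 * p₁.eval x) * exp (-1 * x)
          + (p₂.derivative.eval x - 3 * p₂.eval x) * exp (-3 * x) := fun x hx => by
    have hexp : ∀ y, exp (-x - 2 * y) = exp (-x) * exp (-2 * y) := fun y => by
      rw [← exp_add]; ring_nf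
    simp_rw [hexp, show ∀ y, (x ^ 2 - 6 * x + 7) * x * y * |x - y| * (exp (-x) * exp (-2 * y))
      = (x ^ 2 - 6 * x + 7) * x * exp (-x) * (y * |x - y| * exp (-2 * y)) from fun y => by ring]
    rw [integral_const_mul, integral_Ioi_mul_abs_sub_mul_exp_neg_two_mul hx,
      show exp (-3 * x) = exp (-x) * exp (-2 * x) by rw [← exp_add]; ring_nf]
    simp [p₁, p₂]
    ring
  rw [setIntegral_congr_fun measurableSet_Ioi hinner,
    integral_add (p₁.integrableOn_derivative_sub_mul_exp_neg_mul_Ioi one_pos 0)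
      (p₂.integrableOn_derivative_sub_mul_exp_neg_mul_Ioi three_pos 0),
    p₁.integral_Ioi_derivative_sub_mul_exp_neg_mul one_pos,
    p₂.integral_Ioi_derivative_sub_mul_exp_neg_mul three_pos]
  simp [p₁, p₂]
  norm_num

theorem dim_two_integral_pos :
    0 <
      ∫ p in Set.Ioi (0 : ℝ) ×ˢ Set.Ioi (0 : ℝ),
        (p.1 ^ 2 - 6 * p.1 + 7) * p.1 * p.2 * |p.1 - p.2| *
          Real.exp (-p.1 - 2 * p.2) := by
  have hint := integrableOn_eval_mul_eval_mul_abs_sub_mul_exp ((X ^ 2 - C 6 * X + C 7) * X) X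
    one_pos two_pos
  rw [Measure.volume_eq_prod, setIntegral_prod _ (hint.congr_fun (fun z _ => by simp)
    (measurableSet_Ioi.prod measurableSet_Ioi)), integral_Ioi_integral_Ioi_eq]
  norm_num
end

section
/- For every integer m ≥ 3, ∫_{(0,∞)^m} ( (λ_1 λ_2² + λ_1² λ_2 − 2 λ_1 λ_2 λ_m) / ((λ_1−λ_2)(λ_1−λ_m)(λ_2−λ_m)) ) e^{−λ_m} 𝓘(λ) dλ = 0, the integrand being absolutely integrable. -/
/-!
Exchanging `λ₁` and `λ₂` preserves the orthant, Lebesgue measure and `𝓘`, fixes the numerator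
and flips the sign of the denominator; so the integrand is odd under a measure-preserving
involution of the orthant and its integral vanishes.

For integrability, the three factors of the denominator are factors of the Vandermonde product,
so wherever the denominator is nonzero (elsewhere the integrand is `0`) the integrand is bounded
by `4 ∏ₗ (1 + λₗ) ^ (m² + 3) λₗ e^{-λₗ}`, a product of integrable functions of one variable.
-/

open MeasureTheory Finset

theorem integrableOn_univ_pi_prod {ι E 𝕜 : Type*} [Fintype ι] [RCLike 𝕜] [MeasureSpace E]
    [SigmaFinite (volume : Measure E)] {f : E → 𝕜} {s : Set E} (hf : IntegrableOn f s) :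
    IntegrableOn (fun x : ι → E => ∏ i, f (x i)) (Set.univ.pi fun _ => s) := by
  rw [IntegrableOn, volume_pi, Measure.restrict_pi_pi]
  exact Integrable.fintype_prod fun _ => hf

theorem setIntegral_eq_zero_of_comp_eq_neg {α E : Type*} [MeasurableSpace α]
    [NormedAddCommGroup E] [NormedSpace ℝ E] {μ : Measure α} {s : Set α} {f : α → E}
    (e : α ≃ᵐ α) (he : MeasurePreserving e μ μ) (hs : e ⁻¹' s = s) (hf : ∀ x, f (e x) = -f x) :
    ∫ x in s, f x ∂μ = 0 := by
  have h := he.setIntegral_preimage_emb e.measurableEmbedding f s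
  rw [hs] at h
  simp only [hf, integral_neg] at h
  have h2 : (2 : ℝ) • ∫ x in s, f x ∂μ = 0 := by
    rw [two_smul]
    nth_rewrite 1 [← h]
    exact neg_add_cancel _
  exact (smul_eq_zero.1 h2).resolve_left two_ne_zero

theorem integrableOn_Ioi_one_add_pow_mul_exp (N : ℕ) :
    IntegrableOn (fun t : ℝ => (1 + t) ^ N * (t * Real.exp (-t))) (Set.Ioi 0) := by
  have hpow (n : ℕ) : IntegrableOn (fun t : ℝ => t ^ n * Real.exp (-t)) (Set.Ioi 0) := by
    refine (Real.GammaIntegral_convergent (s := n + 1) (by positivity)).congr_fun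
      (fun t _ => ?_) measurableSet_Ioi
    beta_reduce
    rw [add_sub_cancel_right, Real.rpow_natCast, mul_comm]
  have hexpand : (fun t : ℝ => (1 + t) ^ N * (t * Real.exp (-t))) =
      fun t => ∑ k ∈ range (N + 1), (N.choose k : ℝ) * (t ^ (k + 1) * Real.exp (-t)) := by
    funext t
    rw [add_comm 1 t, add_pow, sum_mul]
    exact sum_congr rfl fun k _ => by ring
  rw [hexpand]
  exact integrable_finsetSum _ fun k _ => (hpow (k + 1)).const_mul _

theorem abs_prod_Ioi_sub_comp_perm {m : ℕ} (x : Fin m → ℝ) (σ : Equiv.Perm (Fin m)) :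
    |∏ i, ∏ j ∈ Ioi i, (x (σ i) - x (σ j))| = |∏ i, ∏ j ∈ Ioi i, (x i - x j)| := by
  have habs_det (y : Fin m → ℝ) :
      |∏ i, ∏ j ∈ Ioi i, (y i - y j)| = |(Matrix.vandermonde y).det| := by
    simp only [Matrix.det_vandermonde, abs_prod]
    exact prod_congr rfl fun i _ => prod_congr rfl fun j _ => abs_sub_comm _ _
  calc |∏ i, ∏ j ∈ Ioi i, (x (σ i) - x (σ j))|
      = |((Matrix.vandermonde x).submatrix σ id).det| := habs_det (x ∘ σ)
    _ = |(Matrix.vandermonde x).det| := by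
      rw [Matrix.det_permute, abs_mul]
      rcases Int.units_eq_one_or (Equiv.Perm.sign σ) with h | h <;> simp [h]
    _ = |∏ i, ∏ j ∈ Ioi i, (x i - x j)| := (habs_det x).symm

section
variable {ι : Type*} [Fintype ι] {x : ι → ℝ}

theorem le_prod_one_add (hx : ∀ i, 0 ≤ x i) (i : ι) : x i ≤ ∏ j, (1 + x j) := by
  classical
  calc x i ≤ 1 + x i := by linarith
    _ ≤ (1 + x i) * ∏ j ∈ univ.erase i, (1 + x j) :=
      le_mul_of_one_le_right (by linarith [hx i]) (one_le_prod fun j _ => by linarith [hx j])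
    _ = ∏ j, (1 + x j) := mul_prod_erase univ (fun j => 1 + x j) (mem_univ i)

theorem abs_sub_le_prod_one_add (hx : ∀ i, 0 ≤ x i) (i j : ι) :
    |x i - x j| ≤ ∏ k, (1 + x k) := by
  have := le_prod_one_add hx i
  have := le_prod_one_add hx j
  rw [abs_le]
  constructor <;> linarith [hx i, hx j]

end

theorem abs_prod_Ioi_sub_le_mul_pow {m : ℕ} {i j k : Fin m} (hij : i < j) (hjk : j < k)
    {x : Fin m → ℝ} (hx : ∀ l, 0 ≤ x l) :
    |∏ a, ∏ b ∈ Ioi a, (x a - x b)| ≤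
      |(x i - x j) * (x i - x k) * (x j - x k)| * (∏ l, (1 + x l)) ^ (m * m) := by
  classical
  set s := univ.sigma fun a : Fin m => Ioi a
  set t : Finset (Σ _ : Fin m, Fin m) := {⟨i, j⟩, ⟨i, k⟩, ⟨j, k⟩}
  have hts : t ⊆ s := by
    simp [t, s, insert_subset_iff, hij, hjk, hij.trans hjk]
  have hprod_t : ∏ p ∈ t, (x p.1 - x p.2) = (x i - x j) * (x i - x k) * (x j - x k) := by
    simp [t, Sigma.ext_iff, hij.ne, hjk.ne, mul_assoc]
  have hrest : |∏ p ∈ s \ t, (x p.1 - x p.2)| ≤ (∏ l, (1 + x l)) ^ (m * m) := by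
    rw [abs_prod]
    calc ∏ p ∈ s \ t, |x p.1 - x p.2| ≤ ∏ _p ∈ s \ t, ∏ l, (1 + x l) :=
          prod_le_prod (fun _ _ => abs_nonneg _) fun p _ => abs_sub_le_prod_one_add hx _ _
      _ = (∏ l, (1 + x l)) ^ #(s \ t) := prod_const _
      _ ≤ (∏ l, (1 + x l)) ^ (m * m) := by
          refine pow_le_pow_right₀ (one_le_prod fun l _ => by linarith [hx l]) ?_
          simpa using card_le_univ (s \ t)
  rw [prod_sigma', ← prod_sdiff hts, hprod_t, abs_mul, mul_comm]
  exact mul_le_mul_of_nonneg_left hrest (abs_nonneg _)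

/-- The weight `𝓘(λ)`. -/
noncomputable def ensembleWeight {m : ℕ} (x : Fin m → ℝ) : ℝ :=
  |∏ i, ∏ j ∈ Ioi i, (x i - x j)| * ∏ j, (x j * Real.exp (-x j))

noncomputable def integrandK1 {m : ℕ} (i j k : Fin m) (x : Fin m → ℝ) : ℝ :=
  (x i * x j ^ 2 + x i ^ 2 * x j - 2 * x i * x j * x k) /
      ((x i - x j) * (x i - x k) * (x j - x k)) * Real.exp (-x k) * ensembleWeight x

theorem abs_numeratorK1_le {a b c Q : ℝ} (ha : 0 ≤ a) (hb : 0 ≤ b) (hc : 0 ≤ c) (haQ : a ≤ Q)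
    (hbQ : b ≤ Q) (hcQ : c ≤ Q) : |a * b ^ 2 + a ^ 2 * b - 2 * a * b * c| ≤ 4 * Q ^ 3 := by
  have hQ : 0 ≤ Q := ha.trans haQ
  have h₁ : a * b ^ 2 ≤ Q ^ 3 := calc
    a * b ^ 2 ≤ Q * Q ^ 2 := by gcongr
    _ = Q ^ 3 := by ring
  have h₂ : a ^ 2 * b ≤ Q ^ 3 := calc
    a ^ 2 * b ≤ Q ^ 2 * Q := by gcongr
    _ = Q ^ 3 := by ring
  have h₃ : a * b * c ≤ Q ^ 3 := calc
    a * b * c ≤ Q * Q * Q := by gcongr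
    _ = Q ^ 3 := by ring
  have : 0 ≤ a * b ^ 2 + a ^ 2 * b := by positivity
  have : 0 ≤ a * b * c := by positivity
  rw [abs_le]
  constructor <;> linarith

theorem abs_integrandK1_le {m : ℕ} {i j k : Fin m} (hij : i < j) (hjk : j < k) {x : Fin m → ℝ}
    (hx : ∀ l, 0 ≤ x l) :
    |integrandK1 i j k x| ≤ 4 * ∏ l, ((1 + x l) ^ (m * m + 3) * (x l * Real.exp (-x l))) := by
  have hdef : integrandK1 i j k x = (x i * x j ^ 2 + x i ^ 2 * x j - 2 * x i * x j * x k) /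
      ((x i - x j) * (x i - x k) * (x j - x k)) * Real.exp (-x k) *
      |∏ a, ∏ b ∈ Ioi a, (x a - x b)| * ∏ l, (x l * Real.exp (-x l)) := by
    simp only [integrandK1, ensembleWeight, mul_assoc]
  rw [hdef]
  set Q := ∏ l, (1 + x l)
  set P := ∏ l, (x l * Real.exp (-x l))
  set N := x i * x j ^ 2 + x i ^ 2 * x j - 2 * x i * x j * x k
  set D := (x i - x j) * (x i - x k) * (x j - x k)
  have hQ : 0 ≤ Q := prod_nonneg fun l _ => by linarith [hx l]
  have hP : 0 ≤ P := prod_nonneg fun l _ => mul_nonneg (hx l) (Real.exp_pos _).le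
  rw [prod_mul_distrib, prod_pow]
  rcases eq_or_ne D 0 with hD | hD
  · rw [hD, div_zero, zero_mul, zero_mul, zero_mul, abs_zero]
    positivity
  · have hN := abs_numeratorK1_le (hx i) (hx j) (hx k) (le_prod_one_add hx i)
      (le_prod_one_add hx j) (le_prod_one_add hx k)
    have hexp : Real.exp (-x k) ≤ 1 := Real.exp_le_one_iff.2 (by linarith [hx k])
    calc |N / D * Real.exp (-x k) * |∏ a, ∏ b ∈ Ioi a, (x a - x b)| * P|
        = |N| / |D| * Real.exp (-x k) * |∏ a, ∏ b ∈ Ioi a, (x a - x b)| * P := by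
          rw [abs_mul, abs_mul, abs_mul, abs_div, abs_abs, abs_of_pos (Real.exp_pos _),
            abs_of_nonneg hP]
      _ ≤ |N| / |D| * 1 * (|D| * Q ^ (m * m)) * P := by
          gcongr
          exact abs_prod_Ioi_sub_le_mul_pow hij hjk hx
      _ = |N| * Q ^ (m * m) * P := by field_simp
      _ ≤ 4 * Q ^ 3 * Q ^ (m * m) * P := by gcongr
      _ = 4 * (Q ^ (m * m + 3) * P) := by ring

theorem integrableOn_integrandK1 {m : ℕ} {i j k : Fin m} (hij : i < j) (hjk : j < k) :
    IntegrableOn (integrandK1 i j k) (Set.univ.pi fun _ => Set.Ioi 0) := by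
  have hS : MeasurableSet (Set.univ.pi fun _ : Fin m => Set.Ioi (0 : ℝ)) :=
    .univ_pi fun _ => measurableSet_Ioi
  have hmeas : Measurable (integrandK1 i j k) := by
    unfold integrandK1 ensembleWeight
    fun_prop
  refine ((integrableOn_univ_pi_prod
    (integrableOn_Ioi_one_add_pow_mul_exp (m * m + 3))).const_mul 4).mono'
    hmeas.aestronglyMeasurable ((ae_restrict_iff' hS).2 (.of_forall fun x hx => ?_))
  exact (Real.norm_eq_abs _).trans_le (abs_integrandK1_le hij hjk fun l => (hx l trivial).le)

theorem integrandK1_comp_swap {m : ℕ} {i j k : Fin m} (hki : k ≠ i) (hkj : k ≠ j)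
    (x : Fin m → ℝ) : integrandK1 i j k (x ∘ Equiv.swap i j) = -integrandK1 i j k x := by
  have hw : ensembleWeight (x ∘ Equiv.swap i j) = ensembleWeight x := by
    unfold ensembleWeight
    rw [Function.comp_def, abs_prod_Ioi_sub_comp_perm,
      Equiv.prod_comp (Equiv.swap i j) fun l => x l * Real.exp (-x l)]
  simp only [integrandK1, hw, Function.comp_apply, Equiv.swap_apply_left,
    Equiv.swap_apply_right, Equiv.swap_apply_of_ne_of_ne hki hkj]
  rw [show (x j - x i) * (x j - x k) * (x i - x k) = -((x i - x j) * (x i - x k) * (x j - x k)) by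
    ring, div_neg]
  ring

theorem setIntegral_integrandK1_eq_zero {m : ℕ} {i j k : Fin m} (hki : k ≠ i) (hkj : k ≠ j) :
    ∫ x in Set.univ.pi fun _ => Set.Ioi 0, integrandK1 i j k x = 0 := by
  set e := MeasurableEquiv.piCongrLeft (fun _ : Fin m => ℝ) (Equiv.swap i j)
  have he (x : Fin m → ℝ) : e x = x ∘ Equiv.swap i j := by
    ext l
    simp [e, MeasurableEquiv.coe_piCongrLeft, Equiv.piCongrLeft_apply_eq_cast]
  refine setIntegral_eq_zero_of_comp_eq_neg e (volume_measurePreserving_piCongrLeft _ _) ?_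
    fun x => (he x).symm ▸ integrandK1_comp_swap hki hkj x
  ext x
  simp only [Set.mem_preimage, he, Set.mem_univ_pi, Function.comp_apply]
  exact (Equiv.swap i j).forall_congr_right (q := fun l => x l ∈ Set.Ioi 0)

theorem lemma_L5_K1 (m : ℕ) (hm : 3 ≤ m) :
    IntegrableOn
      (fun lam : Fin m → ℝ =>
        (lam ⟨0, by omega⟩ * lam ⟨1, by omega⟩ ^ 2 + lam ⟨0, by omega⟩ ^ 2 * lam ⟨1, by omega⟩ -
              2 * lam ⟨0, by omega⟩ * lam ⟨1, by omega⟩ * lam ⟨m - 1, by omega⟩) /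
            ((lam ⟨0, by omega⟩ - lam ⟨1, by omega⟩) * (lam ⟨0, by omega⟩ - lam ⟨m - 1, by omega⟩) *
              (lam ⟨1, by omega⟩ - lam ⟨m - 1, by omega⟩)) *
          Real.exp (-lam ⟨m - 1, by omega⟩) *
          (|∏ i : Fin m, ∏ j ∈ Finset.Ioi i, (lam i - lam j)| *
            ∏ j : Fin m, (lam j * Real.exp (-lam j))))
      (Set.univ.pi fun _ : Fin m => Set.Ioi (0 : ℝ)) volume ∧
    (∫ lam in (Set.univ.pi fun _ : Fin m => Set.Ioi (0 : ℝ)),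
        (lam ⟨0, by omega⟩ * lam ⟨1, by omega⟩ ^ 2 + lam ⟨0, by omega⟩ ^ 2 * lam ⟨1, by omega⟩ -
              2 * lam ⟨0, by omega⟩ * lam ⟨1, by omega⟩ * lam ⟨m - 1, by omega⟩) /
            ((lam ⟨0, by omega⟩ - lam ⟨1, by omega⟩) * (lam ⟨0, by omega⟩ - lam ⟨m - 1, by omega⟩) *
              (lam ⟨1, by omega⟩ - lam ⟨m - 1, by omega⟩)) *
          Real.exp (-lam ⟨m - 1, by omega⟩) *
          (|∏ i : Fin m, ∏ j ∈ Finset.Ioi i, (lam i - lam j)| *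
            ∏ j : Fin m, (lam j * Real.exp (-lam j)))) = 0 := by
  have h01 : (⟨0, by omega⟩ : Fin m) < ⟨1, by omega⟩ := Fin.mk_lt_mk.2 one_pos
  have h1m : (⟨1, by omega⟩ : Fin m) < ⟨m - 1, by omega⟩ := Fin.mk_lt_mk.2 (by omega)
  exact ⟨integrableOn_integrandK1 h01 h1m,
    setIntegral_integrandK1_eq_zero (h01.trans h1m).ne' h1m.ne'⟩
end
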